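/- If a coin system C = (1, c_2, c_3, c_4, c_5, c_6) is orderly, (1, c_2, c_3, c_4) is orderly, and (1, c_2, c_3, c_4, c_5) is not orderly, then c_5 ≤ 2·c_4 and c_6 ≤ 2·c_4. -/

import Mathlib

/-- The largest coin value in `C` that is at most `v` (or 0 if none). -/
def coinMax (C : List ℕ) (v : ℕ) : ℕ := (C.filter (· ≤ v)).foldr max 0

/-- Fuelled greedy coin count. -/
def grdAux (C : List ℕ) : ℕ → ℕ → ℕ
  | 0, _ => 0
  | fuel + 1, v =>
    let c := coinMax C v
    if v = 0 ∨ c = 0 then 0 else 1 + grdAux C fuel (v - c)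

/-- Number of coins used by the greedy algorithm to represent `v` with coin system `C`. -/
def grd (C : List ℕ) (v : ℕ) : ℕ := grdAux C v v

/-- The set of sizes of representations of `v` as nonnegative integer combinations of
the coin values in `C`. -/
def reprCosts (C : List ℕ) (v : ℕ) : Set ℕ :=
  {k | ∃ x : List ℕ, x.length = C.length ∧ (List.zipWith (· * ·) x C).sum = v ∧ x.sum = k}

/-- Minimum number of coins needed to represent `v` with coin system `C`. -/
noncomputable def opt (C : List ℕ) (v : ℕ) : ℕ := sInf (reprCosts C v)

/-- A coin system is orderly if greedy is optimal for every positive value. -/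
def Orderly (C : List ℕ) : Prop := ∀ v : ℕ, 0 < v → grd C v = opt C v

/-!
Let `w` be the least counterexample to greedy for `(1, c₂, c₃, c₄, c₅)`. Adding `c₆` repairs `w`,
so `c₆ ≤ w`, and the Kozen–Zaks argument gives `w < c₄ + c₅`.

If `c₅ > 2c₄`, greedy for the six coins pays `2c₅` as `c₆ + c₄ +` a positive rest, so with at least
three coins instead of two.

If `c₆ > 2c₄`, then `w > 2c₄`. An optimal representation of `w` avoids `c₅`, so it is one in
`(1, c₂, c₃, c₄)`, where greedy is optimal and starts with `c₄ + c₄`; greedy for five coins starts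
with `c₅` instead. Splitting `w - c₅ = (w - 2c₄) + (2c₄ - c₅)`, where `2c₄ - c₅` needs at most one
coin because greedy is still optimal at `2c₄ < w`, shows that greedy does not fail at `w`.
-/

section Representations

variable {C : List ℕ} {c d v k : ℕ}

lemma add_mem_reprCosts (hc : c ∈ C) (hk : k ∈ reprCosts C v) : k + 1 ∈ reprCosts C (c + v) := by
  induction C generalizing v k with
  | nil => simp at hc
  | cons e C ih =>
    obtain ⟨_ | ⟨a, x⟩, hlen, hsum, rfl⟩ := hk
    · simp at hlen
    simp only [List.length_cons, Nat.add_right_cancel_iff, List.zipWith_cons_cons,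
      List.sum_cons] at hlen hsum
    rcases List.mem_cons.1 hc with rfl | hc
    · exact ⟨(a + 1) :: x, by simp [hlen], by simp [← hsum, add_mul]; omega,
        by simp; omega⟩
    · obtain ⟨y, hy, hys, hyx⟩ := ih hc ⟨x, hlen, rfl, rfl⟩
      exact ⟨a :: y, by simp [hy], by simp [hys, ← hsum]; omega, by simp [hyx]; omega⟩

lemma mem_reprCosts_iff :
    k ∈ reprCosts C v ↔ ∃ l : List ℕ, (∀ x ∈ l, x ∈ C) ∧ l.sum = v ∧ l.length = k := by
  constructor
  · induction C generalizing v k with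
    | nil =>
      rintro ⟨x, hlen, hsum, rfl⟩
      obtain rfl := List.eq_nil_of_length_eq_zero hlen
      exact ⟨[], by simp, by simpa using hsum, rfl⟩
    | cons d C ih =>
      rintro ⟨_ | ⟨a, x⟩, hlen, rfl, rfl⟩
      · simp at hlen
      obtain ⟨l, hlC, hls, hll⟩ := ih ⟨x, by simpa using hlen, rfl, rfl⟩
      refine ⟨List.replicate a d ++ l, ?_, ?_, ?_⟩
      · intro y hy
        rcases List.mem_append.1 hy with hy | hy
        · simp [List.eq_of_mem_replicate hy]
        · exact List.mem_cons_of_mem _ (hlC y hy)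
      · simp [hls]
      · simp [hll]
  · rintro ⟨l, hlC, rfl, rfl⟩
    induction l with
    | nil =>
      refine ⟨List.replicate C.length 0, by simp, ?_, by simp⟩
      induction C with
      | nil => rfl
      | cons d C ih => simpa [List.replicate_succ] using ih (by simp)
    | cons c l ih =>
      exact add_mem_reprCosts (hlC c (by simp)) (ih fun x hx => hlC x (by simp [hx]))

lemma opt_le_length {l : List ℕ} (hl : ∀ x ∈ l, x ∈ C) : opt C l.sum ≤ l.length :=
  Nat.sInf_le (mem_reprCosts_iff.2 ⟨l, hl, rfl, rfl⟩)

lemma exists_length_eq_opt (h1 : 1 ∈ C) (v : ℕ) :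
    ∃ l : List ℕ, (∀ x ∈ l, x ∈ C) ∧ l.sum = v ∧ l.length = opt C v := by
  have hne : (reprCosts C v).Nonempty := ⟨v, mem_reprCosts_iff.2
    ⟨List.replicate v 1, fun x hx => List.eq_of_mem_replicate hx ▸ h1, by simp, by simp⟩⟩
  exact mem_reprCosts_iff.1 (Nat.sInf_mem hne)

lemma opt_zero : opt C 0 = 0 :=
  Nat.le_zero.1 (opt_le_length (l := []) (by simp))

lemma opt_add_le_of_mem (h1 : 1 ∈ C) (hc : c ∈ C) (v : ℕ) : opt C (c + v) ≤ opt C v + 1 := by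
  obtain ⟨l, hlC, rfl, hl⟩ := exists_length_eq_opt h1 v
  simpa [hl] using opt_le_length (l := c :: l) (by simpa [hc] using hlC)

lemma opt_mul_le (hc : c ∈ C) (n : ℕ) : opt C (n * c) ≤ n := by
  simpa using opt_le_length (l := List.replicate n c) fun x hx => List.eq_of_mem_replicate hx ▸ hc

lemma opt_add_le (h1 : 1 ∈ C) (u v : ℕ) : opt C (u + v) ≤ opt C u + opt C v := by
  obtain ⟨l₁, hl₁C, rfl, hl₁⟩ := exists_length_eq_opt h1 u
  obtain ⟨l₂, hl₂C, rfl, hl₂⟩ := exists_length_eq_opt h1 v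
  simpa [hl₁, hl₂] using opt_le_length (l := l₁ ++ l₂)
    fun x hx => (List.mem_append.1 hx).elim (hl₁C x) (hl₂C x)

lemma exists_mem_opt_eq_opt_sub_add_one (h1 : 1 ∈ C) (hv : 0 < v) :
    ∃ c ∈ C, 0 < c ∧ c ≤ v ∧ opt C v = opt C (v - c) + 1 := by
  obtain ⟨_ | ⟨c, l⟩, hlC, rfl, hl⟩ := exists_length_eq_opt h1 v
  · simp at hv
  have hc : c ∈ C := hlC c (by simp)
  have hle := opt_le_length (l := l) fun x hx => hlC x (by simp [hx])
  have hge := opt_add_le_of_mem h1 hc l.sum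
  simp only [List.sum_cons, List.length_cons] at hl hge ⊢
  rcases Nat.eq_zero_or_pos c with rfl | hc0
  · simp at hl; omega
  exact ⟨c, hc, hc0, by omega, by rw [Nat.add_sub_cancel_left]; omega⟩

lemma opt_append_le (h1 : 1 ∈ C) (v : ℕ) : opt (C ++ [d]) v ≤ opt C v := by
  obtain ⟨l, hlC, rfl, hl⟩ := exists_length_eq_opt h1 v
  exact hl ▸ opt_le_length fun x hx => List.mem_append_left _ (hlC x hx)

lemma opt_append_eq_or (h1 : 1 ∈ C) (v : ℕ) :
    opt (C ++ [d]) v = opt C v ∨ (d ≤ v ∧ opt (C ++ [d]) v = opt (C ++ [d]) (v - d) + 1) := by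
  obtain ⟨l, hlC, rfl, hl⟩ := exists_length_eq_opt (C := C ++ [d]) (List.mem_append_left _ h1) v
  by_cases hd : d ∈ l
  · right
    have hsum := List.sum_erase hd
    have hle := opt_le_length (l := l.erase d) fun x hx => hlC x (List.mem_of_mem_erase hx)
    have hge := opt_add_le_of_mem (List.mem_append_left _ h1) (by simp : d ∈ C ++ [d]) (l.erase d).sum
    rw [hsum] at hge
    rw [List.length_erase_of_mem hd] at hle
    have hlen := List.length_pos_of_mem hd
    refine ⟨by omega, ?_⟩
    rw [show l.sum - d = (l.erase d).sum by omega]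
    omega
  · left
    have hl' : ∀ x ∈ l, x ∈ C := fun x hx => by
      simpa [show x ≠ d from fun h => hd (h ▸ hx)] using hlC x hx
    exact le_antisymm (opt_append_le h1 _) (hl ▸ opt_le_length hl')

end Representations

section Greedy

variable {C : List ℕ} {d v : ℕ}

lemma coinMax_le (C : List ℕ) (v : ℕ) : coinMax C v ≤ v :=
  List.max_le_of_forall_le _ _ fun x hx => by simpa using (List.mem_filter.1 hx).2

lemma le_coinMax {c : ℕ} (hc : c ∈ C) (hcv : c ≤ v) : c ≤ coinMax C v :=
  List.le_max_of_le (List.mem_filter.2 ⟨hc, by simpa using hcv⟩) le_rfl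

lemma coinMax_mem (h : coinMax C v ≠ 0) : coinMax C v ∈ C := by
  have hne : C.filter (· ≤ v) ≠ [] := fun hnil => h (by simp [coinMax, hnil])
  exact (List.mem_filter.1 (List.maximum_mem (List.foldr_max_of_ne_nil hne).symm)).1

lemma coinMax_append_of_lt (h : v < d) : coinMax (C ++ [d]) v = coinMax C v := by
  simp [coinMax, List.filter_append, h.not_ge]

lemma coinMax_append_of_le (hC : ∀ x ∈ C, x ≤ d) (h : d ≤ v) : coinMax (C ++ [d]) v = d := by
  refine le_antisymm (List.max_le_of_forall_le _ _ fun x hx => ?_) (le_coinMax (by simp) h)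
  rcases List.mem_append.1 (List.mem_filter.1 hx).1 with hx | hx
  · exact hC x hx
  · exact (List.mem_singleton.1 hx).le

lemma grdAux_congr_fuel : ∀ f g v, v ≤ f → v ≤ g → grdAux C f v = grdAux C g v
  | 0, g, v, hf, _ => by
    obtain rfl : v = 0 := by omega
    cases g <;> simp [grdAux]
  | f + 1, 0, v, _, hg => by
    obtain rfl : v = 0 := by omega
    simp [grdAux]
  | f + 1, g + 1, v, hf, hg => by
    simp only [grdAux]
    split_ifs with h
    · rfl
    · have hc : 0 < coinMax C v := by omega
      rw [grdAux_congr_fuel f g (v - coinMax C v) (by omega) (by omega)]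

lemma grd_eq_zero_of_coinMax (h : coinMax C v = 0) : grd C v = 0 := by
  cases v <;> simp [grd, grdAux, h]

lemma grd_eq_grd_sub_coinMax_add_one (h : coinMax C v ≠ 0) :
    grd C v = grd C (v - coinMax C v) + 1 := by
  obtain ⟨n, rfl⟩ : ∃ n, v = n + 1 := ⟨v - 1, by have := coinMax_le C v; omega⟩
  have hc : 0 < coinMax C (n + 1) := Nat.pos_of_ne_zero h
  simp only [grd, grdAux, h, or_false, Nat.add_one_ne_zero, if_false]
  rw [grdAux_congr_fuel n _ _ (by omega) le_rfl, add_comm]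

lemma grd_append_of_lt (h : v < d) : grd (C ++ [d]) v = grd C v := by
  induction v using Nat.strong_induction_on with
  | _ v ih =>
    by_cases hc : coinMax C v = 0
    · rw [grd_eq_zero_of_coinMax hc, grd_eq_zero_of_coinMax (by rwa [coinMax_append_of_lt h])]
    · have hcv := coinMax_le C v
      rw [grd_eq_grd_sub_coinMax_add_one hc,
        grd_eq_grd_sub_coinMax_add_one (by rwa [coinMax_append_of_lt h]),
        coinMax_append_of_lt h, ih _ (by omega) (by omega)]

lemma grd_append_of_le (hC : ∀ x ∈ C, x ≤ d) (hd : 0 < d) (h : d ≤ v) :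
    grd (C ++ [d]) v = grd (C ++ [d]) (v - d) + 1 := by
  rw [grd_eq_grd_sub_coinMax_add_one (by rw [coinMax_append_of_le hC h]; omega),
    coinMax_append_of_le hC h]

lemma grd_pos (h1 : 1 ∈ C) (hv : 0 < v) : 0 < grd C v := by
  rw [grd_eq_grd_sub_coinMax_add_one (by have := le_coinMax h1 hv; omega)]
  omega

lemma opt_le_grd (h1 : 1 ∈ C) (v : ℕ) : opt C v ≤ grd C v := by
  induction v using Nat.strong_induction_on with
  | _ v ih =>
    by_cases hc : coinMax C v = 0
    · have hv : v = 0 := by by_contra hv; have := le_coinMax h1 (Nat.pos_of_ne_zero hv); omega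
      simp [hv, opt_zero]
    · have hcv := coinMax_le C v
      have hstep := opt_add_le_of_mem h1 (coinMax_mem hc) (v - coinMax C v)
      rw [Nat.add_sub_cancel' hcv] at hstep
      rw [grd_eq_grd_sub_coinMax_add_one hc]
      have := ih (v - coinMax C v) (by omega)
      omega

end Greedy

def IsMinimalCounterexample (C : List ℕ) (w : ℕ) : Prop :=
  grd C w ≠ opt C w ∧ ∀ u < w, grd C u = opt C u

lemma exists_isMinimalCounterexample {C : List ℕ} (h : ¬ Orderly C) :
    ∃ w, IsMinimalCounterexample C w := by
  classical
  have hex : ∃ w, grd C w ≠ opt C w := by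
    simp only [Orderly, not_forall] at h
    obtain ⟨w, -, hw⟩ := h
    exact ⟨w, hw⟩
  exact ⟨Nat.find hex, Nat.find_spec hex, fun u hu => not_not.1 (Nat.find_min hex hu)⟩

namespace IsMinimalCounterexample

variable {C : List ℕ} {a b d w : ℕ}

lemma pos (hw : IsMinimalCounterexample C w) : 0 < w := by
  refine Nat.pos_of_ne_zero fun h => hw.1 ?_
  rw [h, opt_zero]
  rfl

lemma opt_lt_grd (hw : IsMinimalCounterexample C w) (h1 : 1 ∈ C) : opt C w < grd C w :=
  (opt_le_grd h1 w).lt_of_ne (Ne.symm hw.1)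

lemma le_of_orderly_append (hw : IsMinimalCounterexample C w) (h1 : 1 ∈ C)
    (hord : Orderly (C ++ [d])) : d ≤ w := by
  by_contra! hwd
  have hord_w := hord w hw.pos
  rw [grd_append_of_lt hwd] at hord_w
  have hopt := opt_append_le (d := d) h1 w
  have hlt := hw.opt_lt_grd h1
  omega

lemma opt_lt_opt_sub_add_one (hw : IsMinimalCounterexample (C ++ [d]) w) (h1 : 1 ∈ C)
    (hC : ∀ x ∈ C, x ≤ d) (hdw : d ≤ w) :
    opt (C ++ [d]) w < opt (C ++ [d]) (w - d) + 1 := by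
  have hd : 0 < d := hC 1 h1
  have hlt := hw.opt_lt_grd (List.mem_append_left _ h1)
  rwa [grd_append_of_le hC hd hdw, hw.2 _ (by omega)] at hlt

lemma opt_append_eq (hw : IsMinimalCounterexample (C ++ [d]) w) (h1 : 1 ∈ C)
    (hC : ∀ x ∈ C, x ≤ d) : opt (C ++ [d]) w = opt C w := by
  refine (opt_append_eq_or h1 w).resolve_right fun ⟨hdw, hopt⟩ => ?_
  have := hw.opt_lt_opt_sub_add_one h1 hC hdw
  omega

/-- Kozen–Zaks: if an optimal representation of `w` used a coin `c` with `c + d ≤ w`, greedy,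
optimal on `w - c`, would be optimal on `w` as well. -/
lemma lt_add_of_forall_le (hw : IsMinimalCounterexample (C ++ [d]) w) (h1 : 1 ∈ C)
    (hC : ∀ x ∈ C, x ≤ a) (had : a ≤ d) : w < a + d := by
  by_contra! haw
  have hCd : ∀ x ∈ C, x ≤ d := fun x hx => (hC x hx).trans had
  have h1' : 1 ∈ C ++ [d] := List.mem_append_left _ h1
  have hlt := hw.opt_lt_opt_sub_add_one h1 hCd (by omega)
  obtain ⟨c, hc, hc0, hcw, hopt⟩ := exists_mem_opt_eq_opt_sub_add_one h1' hw.pos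
  rcases List.mem_append.1 hc with hcC | hcd
  · have hca := hC c hcC
    have hgrd := grd_append_of_le hCd (hCd 1 h1) (show d ≤ w - c by omega)
    rw [hw.2 _ (by omega), hw.2 _ (by omega)] at hgrd
    have hsub := opt_add_le_of_mem h1' hc (w - c - d)
    rw [show c + (w - c - d) = w - d by omega] at hsub
    omega
  · rw [List.mem_singleton.1 hcd] at hopt
    omega

lemma le_two_mul (hw : IsMinimalCounterexample (C ++ [a] ++ [b]) w) (h1 : 1 ∈ C)
    (hC : ∀ x ∈ C, x ≤ a) (hab : a < b) (hb : b ≤ 2 * a) (hord : Orderly (C ++ [a])) :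
    w ≤ 2 * a := by
  by_contra! haw
  have ha : 0 < a := hC 1 h1
  have h1₄ : 1 ∈ C ++ [a] := List.mem_append_left _ h1
  have h1₅ : 1 ∈ C ++ [a] ++ [b] := List.mem_append_left _ h1₄
  have hC₄ : ∀ x ∈ C ++ [a], x ≤ a := by
    simpa [or_imp, forall_and] using hC
  have hC₄b : ∀ x ∈ C ++ [a], x ≤ b := fun x hx => (hC₄ x hx).trans hab.le
  have hwab : w < a + b := hw.lt_add_of_forall_le h1₄ hC₄ hab.le
  have hgrd₄ : grd (C ++ [a]) w = opt (C ++ [a] ++ [b]) (w - 2 * a) + 2 := by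
    rw [grd_append_of_le hC ha (by omega), grd_append_of_le hC ha (by omega),
      show w - a - a = w - 2 * a by omega, ← grd_append_of_lt (d := b) (by omega),
      hw.2 _ (by omega)]
  have hgrd₅ : grd (C ++ [a] ++ [b]) w = opt (C ++ [a] ++ [b]) (w - b) + 1 := by
    rw [grd_append_of_le hC₄b (by omega) (by omega), hw.2 _ (by omega)]
  have hopt := hw.opt_append_eq h1₄ hC₄b
  have hord_w := hord w hw.pos
  have hlt := hw.opt_lt_grd h1₅
  -- greedy is still optimal at `2 * a < w`, which forces `opt (2 * a - b) ≤ 1`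
  have h2a := hw.2 (2 * a) haw
  rw [grd_append_of_le hC₄b (by omega) hb, hw.2 _ (by omega)] at h2a
  have h2a_le := opt_mul_le (C := C ++ [a] ++ [b]) (c := a) (by simp) 2
  have hsub := opt_add_le h1₅ (w - 2 * a) (2 * a - b)
  rw [show w - 2 * a + (2 * a - b) = w - b by omega] at hsub
  omega

end IsMinimalCounterexample

lemma le_two_mul_of_orderly {C : List ℕ} {a b c : ℕ} (h1 : 1 ∈ C) (hC : ∀ x ∈ C, x ≤ a)
    (hab : a < b) (hbc : b < c) (hcab : c < a + b) (hord : Orderly (C ++ [a] ++ [b] ++ [c])) :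
    b ≤ 2 * a := by
  by_contra! hba
  have ha : 0 < a := hC 1 h1
  have hC₅ : ∀ x ∈ C ++ [a] ++ [b], x ≤ c := by
    simp only [List.mem_append, List.mem_singleton]
    rintro x ((hx | rfl) | rfl) <;> grind
  have hgrd : grd (C ++ [a] ++ [b] ++ [c]) (2 * b) = grd (C ++ [a]) (2 * b - c - a) + 2 := by
    rw [grd_append_of_le hC₅ (by omega) (by omega), grd_append_of_lt (by omega),
      grd_append_of_lt (by omega), grd_append_of_le hC ha (by omega)]
  have hpos := grd_pos (List.mem_append_left [a] h1) (show 0 < 2 * b - c - a by omega)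
  have hopt := opt_mul_le (C := C ++ [a] ++ [b] ++ [c]) (c := b) (by simp) 2
  have hord_2b := hord (2 * b) (by omega)
  omega

theorem stmt_14_general (c₂ c₃ c₄ c₅ c₆ : ℕ)
    (h3 : c₂ < c₃) (h4 : c₃ < c₄) (h5 : c₄ < c₅) (h6 : c₅ < c₆)
    (hord6 : Orderly [1, c₂, c₃, c₄, c₅, c₆])
    (hord4 : Orderly [1, c₂, c₃, c₄])
    (hnot5 : ¬ Orderly [1, c₂, c₃, c₄, c₅]) :
    c₅ ≤ 2 * c₄ ∧ c₆ ≤ 2 * c₄ := by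
  have h1 : 1 ∈ [1, c₂, c₃] := by simp
  have hC : ∀ x ∈ [1, c₂, c₃], x ≤ c₄ := by simp; omega
  obtain ⟨w, hw⟩ : ∃ w, IsMinimalCounterexample ([1, c₂, c₃] ++ [c₄] ++ [c₅]) w :=
    exists_isMinimalCounterexample hnot5
  have hc₆w : c₆ ≤ w := hw.le_of_orderly_append (by simp) hord6
  have hwc : w < c₄ + c₅ := hw.lt_add_of_forall_le (by simp) (by simp; omega) h5.le
  have hc₅ : c₅ ≤ 2 * c₄ := le_two_mul_of_orderly h1 hC h5 h6 (by omega) hord6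
  exact ⟨hc₅, hc₆w.trans (hw.le_two_mul h1 hC h5 hc₅ hord4)⟩

theorem stmt_14 (c₂ c₃ c₄ c₅ c₆ : ℕ)
    (h2 : 1 < c₂) (h3 : c₂ < c₃) (h4 : c₃ < c₄) (h5 : c₄ < c₅) (h6 : c₅ < c₆)
    (hord6 : Orderly [1, c₂, c₃, c₄, c₅, c₆])
    (hord4 : Orderly [1, c₂, c₃, c₄])
    (hnot5 : ¬ Orderly [1, c₂, c₃, c₄, c₅]) :
    c₅ ≤ 2 * c₄ ∧ c₆ ≤ 2 * c₄ :=
  stmt_14_general c₂ c₃ c₄ c₅ c₆ h3 h4 h5 h6 hord6 hord4 hnot5
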